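/- arXiv:1304.0092 — 7 statements merged into one kernel-verified Lean document; each statement's English description precedes it below -/
import Mathlib

section
/- Let p be a prime and t a positive integer with base-p representation t = Σ_λ t_λ p^λ. The number of (m+1)-tuples (e_0,...,e_m) of non-negative integers with e_0 + ... + e_m = t such that the multinomial coefficient t!/(e_0!···e_m!) is not divisible by p equals Π_λ C(m + t_λ, t_λ). -/
/-!
Legendre's formula gives `v_p(n!) = n / p + v_p((n / p)!)`. Applied to the multinomial
coefficient of `e` with `t = ∑ eᵢ`, it splits `v_p` of that coefficient into the carry
`t / p - ∑ (eᵢ / p)`, the gap `v_p((t / p)!) - v_p((∑ eᵢ / p)!)`, and `v_p` of the multinomial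
coefficient of `(eᵢ / p)ᵢ`, all three nonnegative. So `p` does not divide the coefficient exactly
when there is no carry in the last digit and `p` does not divide the coefficient of the shifted
tuple. Hence `e ↦ (e % p, e / p)` is a bijection from the tuples counted for `t` onto pairs of an
arbitrary tuple summing to the last digit `t % p` and a tuple counted for `t / p`. By induction on
the digits, the count is the product of the stars-and-bars numbers `C(m + tₗ, tₗ)`.
-/

open Finset Nat

theorem Finset.Nat.le_of_mem_antidiagonalTuple {k n : ℕ} {e : Fin k → ℕ}
    (he : e ∈ antidiagonalTuple k n) (j : Fin k) : e j ≤ n :=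
  mem_antidiagonalTuple.1 he ▸ single_le_sum (fun i _ => Nat.zero_le (e i)) (mem_univ j)

theorem Finset.Nat.card_antidiagonalTuple_succ (m n : ℕ) :
    #(antidiagonalTuple (m + 1) n) = (m + n).choose n := by
  rw [← Fintype.card_coe, Fintype.card_congr ((Equiv.subtypeEquivRight fun _ =>
    mem_antidiagonalTuple).trans (Sym.equivNatSumOfFintype _ n).symm), Sym.card_sym_eq_choose]
  simp

theorem List.prod_range_getD {α M : Type*} [CommMonoid M] (L : List α) {d : α} {f : α → M}
    (hf : f d = 1) {n : ℕ} (hn : L.length ≤ n) :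
    ∏ i ∈ Finset.range n, f (L.getD i d) = (L.map f).prod := by
  induction L generalizing n with
  | nil => simp [hf]
  | cons a L ih =>
    obtain ⟨n, rfl⟩ : ∃ n', n = n' + 1 := Nat.exists_eq_add_one.2 (by simp at hn; omega)
    simp only [Finset.prod_range_succ', getD_cons_succ, getD_cons_zero, map_cons, prod_cons,
      ih (by simpa using hn), mul_comm]

namespace Nat

theorem sum_div_le_div_sum {α : Type*} (s : Finset α) (e : α → ℕ) (d : ℕ) :
    ∑ i ∈ s, e i / d ≤ (∑ i ∈ s, e i) / d := by
  rcases d.eq_zero_or_pos with rfl | hd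
  · simp
  rw [Nat.le_div_iff_mul_le hd, sum_mul]
  exact sum_le_sum fun i _ => Nat.div_mul_le_self (e i) d

theorem sum_mod_eq_mod_sum_of_sum_div_eq {α : Type*} {s : Finset α} {e : α → ℕ} {d : ℕ}
    (h : ∑ i ∈ s, e i / d = (∑ i ∈ s, e i) / d) : ∑ i ∈ s, e i % d = (∑ i ∈ s, e i) % d := by
  have hsplit : ∑ i ∈ s, e i % d + d * ∑ i ∈ s, e i / d = ∑ i ∈ s, e i := by
    rw [mul_sum, ← sum_add_distrib]
    exact sum_congr rfl fun i _ => Nat.mod_add_div (e i) d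
  rw [h] at hsplit
  linarith [Nat.mod_add_div (∑ i ∈ s, e i) d]

variable {p : ℕ} [hp : Fact p.Prime]

theorem padicValNat_finset_prod {α : Type*} {s : Finset α} {f : α → ℕ}
    (hf : ∀ i ∈ s, f i ≠ 0) :
    padicValNat p (∏ i ∈ s, f i) = ∑ i ∈ s, padicValNat p (f i) := by
  simp only [← factorization_def _ hp.out, factorization_prod hf, Finsupp.coe_finsetSum,
    Finset.sum_apply]

theorem padicValNat_factorial_le_of_le {a b : ℕ} (h : a ≤ b) :
    padicValNat p a ! ≤ padicValNat p b ! :=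
  (padicValNat_dvd_iff_le (factorial_ne_zero b)).1
    (pow_padicValNat_dvd.trans (factorial_dvd_factorial h))

theorem padicValNat_factorial_eq_div_add (n : ℕ) :
    padicValNat p n ! = padicValNat p (n / p)! + n / p := by
  rw [← padicValNat_mul_div_factorial, padicValNat_factorial_mul]

theorem padicValNat_multinomial_add {α : Type*} (s : Finset α) (e : α → ℕ) :
    padicValNat p (multinomial s e) + ∑ i ∈ s, padicValNat p (e i)! =
      padicValNat p (∑ i ∈ s, e i)! := by
  rw [← multinomial_spec, padicValNat.mul (prod_ne_zero_iff.2 fun i _ => factorial_ne_zero _)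
    (multinomial_pos s e).ne', padicValNat_finset_prod fun i _ => factorial_ne_zero _, add_comm]

theorem not_dvd_multinomial_iff {α : Type*} (s : Finset α) (e : α → ℕ) :
    ¬ p ∣ multinomial s e ↔
      ∑ i ∈ s, e i / p = (∑ i ∈ s, e i) / p ∧ ¬ p ∣ multinomial s (fun i => e i / p) := by
  have hval := padicValNat_multinomial_add (p := p) s e
  have hval' := padicValNat_multinomial_add (p := p) s (fun i => e i / p)
  rw [padicValNat_factorial_eq_div_add (∑ i ∈ s, e i),
    sum_congr rfl fun i _ => padicValNat_factorial_eq_div_add (e i), sum_add_distrib] at hval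
  have hcarry := sum_div_le_div_sum s e p
  have hgap := padicValNat_factorial_le_of_le (p := p) hcarry
  simp only [dvd_iff_padicValNat_ne_zero (multinomial_pos _ _).ne', not_not]
  constructor
  · intro h
    omega
  · rintro ⟨hq, h⟩
    rw [hq] at hval'
    omega

theorem card_filter_not_dvd_multinomial (k t : ℕ) :
    #{e ∈ antidiagonalTuple k t | ¬ p ∣ multinomial univ e} =
      #(antidiagonalTuple k (t % p)) *
        #{e ∈ antidiagonalTuple k (t / p) | ¬ p ∣ multinomial univ e} := by
  have hp0 := hp.out.pos
  have hdigit : ∀ a ∈ antidiagonalTuple k (t % p), ∀ (b : Fin k → ℕ) j,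
      (a j + p * b j) % p = a j ∧ (a j + p * b j) / p = b j := fun a ha b j => by
    have hlt : a j < p := (le_of_mem_antidiagonalTuple ha j).trans_lt (Nat.mod_lt t hp0)
    rw [Nat.add_mul_mod_self_left, Nat.mod_eq_of_lt hlt, Nat.add_mul_div_left _ _ hp0,
      Nat.div_eq_of_lt hlt, zero_add]
    exact ⟨rfl, rfl⟩
  rw [← card_product]
  refine card_nbij' (fun e => (fun j => e j % p, fun j => e j / p))
    (fun ab j => ab.1 j + p * ab.2 j) ?_ ?_ ?_ ?_
  · intro e he
    simp only [mem_coe, mem_filter, mem_product, mem_antidiagonalTuple] at he ⊢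
    obtain ⟨rfl, hnd⟩ := he
    obtain ⟨hdiv, hnd⟩ := (not_dvd_multinomial_iff _ _).1 hnd
    exact ⟨sum_mod_eq_mod_sum_of_sum_div_eq hdiv, hdiv, hnd⟩
  · rintro ⟨a, b⟩ hab
    simp only [mem_coe, mem_filter, mem_product, mem_antidiagonalTuple] at hab ⊢
    obtain ⟨ha, hb, hnd⟩ := hab
    have hsum : ∑ j, (a j + p * b j) = t := by
      rw [sum_add_distrib, ← mul_sum, ha, hb, Nat.mod_add_div]
    refine ⟨hsum, (not_dvd_multinomial_iff _ _).2 ⟨?_, ?_⟩⟩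
    · simp only [(hdigit a (mem_antidiagonalTuple.2 ha) b _).2, hsum, hb]
    · simpa only [(hdigit a (mem_antidiagonalTuple.2 ha) b _).2] using hnd
  · intro e _
    funext j
    exact Nat.mod_add_div (e j) p
  · rintro ⟨a, b⟩ hab
    have ha := (mem_product.1 hab).1
    simp only [(hdigit a ha b _).1, (hdigit a ha b _).2]

theorem card_filter_not_dvd_multinomial_eq_prod_digits (k t : ℕ) :
    #{e ∈ antidiagonalTuple k t | ¬ p ∣ multinomial univ e} =
      ((p.digits t).map fun d => #(antidiagonalTuple k d)).prod := by
  induction t using Nat.strong_induction_on with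
  | _ t ih =>
    rcases t.eq_zero_or_pos with rfl | ht
    · simp [antidiagonalTuple_zero_right, filter_singleton, multinomial, hp.out.ne_one]
    · rw [card_filter_not_dvd_multinomial, ih (t / p) (Nat.div_lt_self ht hp.out.one_lt),
        digits_def' hp.out.one_lt ht, List.map_cons, List.prod_cons]

end Nat

theorem stmt0_general (p : ℕ) (hp : p.Prime) (t m : ℕ) :
    ((Finset.Nat.antidiagonalTuple (m + 1) t).filter
        (fun e => ¬ p ∣ Nat.multinomial Finset.univ e)).card
      = ∏ l ∈ Finset.range (t + 1),
          (m + (Nat.digits p t).getD l 0).choose ((Nat.digits p t).getD l 0) := by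
  have : Fact p.Prime := ⟨hp⟩
  have hlen : (p.digits t).length ≤ t + 1 :=
    (digits_length_le_iff hp.one_lt t).2
      ((Nat.lt_pow_self hp.one_lt).trans_le (Nat.pow_le_pow_right hp.pos t.le_succ))
  rw [card_filter_not_dvd_multinomial_eq_prod_digits,
    List.prod_range_getD _ (f := fun d => (m + d).choose d) (by simp) hlen]
  simp only [Finset.Nat.card_antidiagonalTuple_succ]

/-- The number of (m+1)-tuples (e_0,...,e_m) of non-negative integers summing to t
such that the multinomial coefficient is not divisible by the prime p equals
the product over base-p digits t_λ of t of C(m + t_λ, t_λ). -/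
theorem stmt0 (p : ℕ) (hp : p.Prime) (t m : ℕ) (ht : 0 < t) :
    ((Finset.Nat.antidiagonalTuple (m + 1) t).filter
        (fun e => ¬ p ∣ Nat.multinomial Finset.univ e)).card
      = ∏ l ∈ Finset.range (t + 1),
          (m + (Nat.digits p t).getD l 0).choose ((Nat.digits p t).getD l 0) :=
  stmt0_general p hp t m
end

section
/- Generalized Lucas theorem for multinomial coefficients: for a prime p, positive integer t, and non-negative integers e_0,...,e_m with e_0+...+e_m = t, the multinomial coefficient t!/(e_0!···e_m!) is congruent modulo p to the product over λ of the multinomial coefficients t_λ!/(e_{0,λ}!···e_{m,λ}!), where n_λ denotes the λ-th base-p digit of n (and a multinomial coefficient with digit sum not equal to t_λ is interpreted as 0). -/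
/-!
Induct on the index set. Adding one index `a` multiplies the multinomial coefficient by
`(f a + S).choose (f a)`, where `S` is the sum of the other entries, and Lucas's theorem expands
this binomial coefficient digitwise. If some digit of `f a` exceeds the corresponding digit of
`f a + S`, Lucas's product vanishes, and so does the target product, since a digit of `f a + S`
that is the digit sum of the entries is at least the digit of `f a`. Otherwise no carry occurs
in `f a + S`, so its digits are the sums of the digits of `f a` and `S`, and the two products
agree factor by factor.
-/

open Finset

/-- In the induction step `n l`, `a l`, `S l` are the `l`-th digits of `f a + S`, `f a`, `S`,
and `σ l` is the sum of the `l`-th digits of the remaining entries. -/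
theorem prod_choose_mul_ite_eq_prod_ite {ι : Type*} (I : Finset ι) {n a S σ M : ι → ℕ}
    (hno_carry : (∀ l ∈ I, a l ≤ n l) → ∀ l ∈ I, a l + S l = n l) :
    ∏ l ∈ I, (n l).choose (a l) * (if σ l = S l then M l else 0) =
      ∏ l ∈ I, if a l + σ l = n l then (a l + σ l).choose (a l) * M l else 0 := by
  by_cases hle : ∀ l ∈ I, a l ≤ n l
  · refine prod_congr rfl fun l hl => ?_
    have := hno_carry hle l hl
    by_cases hσ : σ l = S l
    · rw [if_pos hσ, if_pos (by omega), hσ, this]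
    · rw [if_neg hσ, if_neg (by omega), mul_zero]
  · push Not at hle
    obtain ⟨l, hl, hlt⟩ := hle
    rw [prod_eq_zero hl (by rw [Nat.choose_eq_zero_of_lt hlt, zero_mul]),
      prod_eq_zero hl (if_neg (by omega))]

namespace Nat

theorem mod_add_mod_lt_of_mod_le_add_mod {a b p : ℕ} (hp : 0 < p) (h : a % p ≤ (a + b) % p) :
    a % p + b % p < p := by
  by_contra! hcarry
  have := add_mod_add_of_le_add_mod hcarry
  have := mod_lt b hp
  omega

theorem div_pow_succ_mod (n p l : ℕ) : n / p ^ (l + 1) % p = n / p / p ^ l % p := by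
  rw [pow_succ', Nat.div_div_eq_div_mul]

theorem div_pow_mod_add_div_pow_mod {p : ℕ} (hp : 0 < p) {a b l : ℕ}
    (h : ∀ j ≤ l, a / p ^ j % p ≤ (a + b) / p ^ j % p) :
    a / p ^ l % p + b / p ^ l % p = (a + b) / p ^ l % p := by
  induction l generalizing a b with
  | zero =>
    have h0 : a % p ≤ (a + b) % p := by simpa using h 0 le_rfl
    simpa using (add_mod_of_add_mod_lt (mod_add_mod_lt_of_mod_le_add_mod hp h0)).symm
  | succ l ih =>
    have h0 : a % p ≤ (a + b) % p := by simpa using h 0 (zero_le _)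
    have hdiv : (a + b) / p = a / p + b / p :=
      add_div_eq_of_add_mod_lt (mod_add_mod_lt_of_mod_le_add_mod hp h0)
    simp only [div_pow_succ_mod, hdiv]
    refine ih fun j hj => ?_
    simpa only [div_pow_succ_mod, hdiv] using h (j + 1) (by omega)

theorem multinomial_modEq_prod_range_digits {α : Type*} [DecidableEq α] {p : ℕ}
    [Fact p.Prime] {L : ℕ} (s : Finset α) (f : α → ℕ) (hL : ∑ i ∈ s, f i < p ^ L) :
    multinomial s f ≡
      ∏ l ∈ range L,
        if ∑ i ∈ s, f i / p ^ l % p = (∑ i ∈ s, f i) / p ^ l % p then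
          multinomial s (fun i => f i / p ^ l % p)
        else 0 [MOD p] := by
  induction s using Finset.induction_on with
  | empty => simp [Nat.ModEq.refl]
  | insert a s ha ih =>
    rw [sum_insert ha] at hL ⊢
    have hp : 0 < p := (Fact.out : p.Prime).pos
    have hno_carry : (∀ l ∈ range L, f a / p ^ l % p ≤ (f a + ∑ i ∈ s, f i) / p ^ l % p) →
        ∀ l ∈ range L, f a / p ^ l % p + (∑ i ∈ s, f i) / p ^ l % p =
          (f a + ∑ i ∈ s, f i) / p ^ l % p := fun h l hl =>
      div_pow_mod_add_div_pow_mod hp fun j hj => h j (by simp at hl ⊢; omega)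
    calc multinomial (insert a s) f
        ≡ (∏ l ∈ range L, ((f a + ∑ i ∈ s, f i) / p ^ l % p).choose (f a / p ^ l % p)) *
            ∏ l ∈ range L,
              if ∑ i ∈ s, f i / p ^ l % p = (∑ i ∈ s, f i) / p ^ l % p then
                multinomial s (fun i => f i / p ^ l % p)
              else 0 [MOD p] := by
          rw [multinomial_insert ha]
          exact (Choose.choose_modEq_prod_range_choose_nat hL (by omega)).mul
            (ih (by omega))
      _ = _ := by
        rw [← prod_mul_distrib, prod_choose_mul_ite_eq_prod_ite _ hno_carry]
        simp only [sum_insert ha, multinomial_insert ha]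

end Nat

theorem stmt2_general (p : ℕ) (hp : p.Prime) (t m : ℕ)
    (e : Fin (m + 1) → ℕ) (hsum : ∑ i, e i = t) :
    Nat.multinomial Finset.univ e ≡
      (∏ l ∈ Finset.range (t + 1),
        if (∑ i, (Nat.digits p (e i)).getD l 0) = (Nat.digits p t).getD l 0 then
          Nat.multinomial Finset.univ (fun i => (Nat.digits p (e i)).getD l 0)
        else 0) [MOD p] := by
  have := Fact.mk hp
  subst hsum
  simp only [Nat.getD_digits _ _ hp.two_le]
  exact Nat.multinomial_modEq_prod_range_digits _ _
    ((Nat.lt_pow_self hp.one_lt).trans (Nat.pow_lt_pow_right hp.one_lt (lt_add_one _)))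

/-- Generalized Lucas theorem for multinomial coefficients: the multinomial coefficient
is congruent mod p to the product of digitwise multinomial coefficients, where a digitwise
coefficient whose digit sum differs from the corresponding digit of t counts as 0. -/
theorem stmt2 (p : ℕ) (hp : p.Prime) (t m : ℕ) (ht : 0 < t)
    (e : Fin (m + 1) → ℕ) (hsum : ∑ i, e i = t) :
    Nat.multinomial Finset.univ e ≡
      (∏ l ∈ Finset.range (t + 1),
        if (∑ i, (Nat.digits p (e i)).getD l 0) = (Nat.digits p t).getD l 0 then
          Nat.multinomial Finset.univ (fun i => (Nat.digits p (e i)).getD l 0)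
        else 0) [MOD p] :=
  stmt2_general p hp t m e hsum
end

section
/- Let F be a field of characteristic p > 0 with |F| ≥ t, let V be an (m+1)-dimensional F-vector space, and let t = Σ_λ t_λ p^λ be the base-p representation of t. Then the subspace of the t-th symmetric power Sym^t(V) spanned by the set of powers {a^t : a ∈ V} has dimension Π_λ C(m + t_λ, t_λ). -/
/-!
Expanding `(∑ aᵢ Xᵢ)ᵗ` by the multinomial theorem puts every power in the span of the monomials
`X^α`, `|α| = t`, whose multinomial coefficient is nonzero in `F`. Conversely, since `|F| ≥ t`,
Vandermonde interpolation in one coordinate at a time recovers each such monomial from the powers,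
and monomials are linearly independent. So the dimension is the number of compositions `α` of `t`
into `m + 1` parts with `p ∤ multinomial α`. By Kummer's theorem these are the `α` whose parts add
in base `p` without carry, i.e. tuples, indexed by the digit positions `l`, of compositions of the
digit `t_l` into `m + 1` parts; there are `C(m + t_l, t_l)` of these for each `l`.
-/

open Finset Module

namespace Nat

variable {p : ℕ}

theorem Prime.not_dvd_choose_add_iff (hp : p.Prime) (a b : ℕ) :
    ¬ p ∣ (a + b).choose a ↔ ∀ i, a % p ^ i + b % p ^ i < p ^ i := by
  have hlog : log p (b + a) < log p (a + b) + 1 := by rw [add_comm]; omega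
  rw [← emultiplicity_eq_zero, add_comm a b, hp.emultiplicity_choose' hlog, Nat.cast_eq_zero,
    Finset.card_eq_zero, filter_eq_empty_iff]
  refine ⟨fun h i => ?_, fun h i _ => not_le.mpr (h i)⟩
  rcases i.eq_zero_or_pos with rfl | hi
  · simp [mod_one]
  by_cases hiB : i < log p (a + b) + 1
  · exact not_le.mp (h (mem_Ico.mpr ⟨hi, hiB⟩))
  · have : a + b < p ^ i := (lt_pow_succ_log_self hp.one_lt _).trans_le
      (pow_le_pow_right₀ hp.one_lt.le (not_lt.mp hiB))
    have := mod_le a (p ^ i)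
    have := mod_le b (p ^ i)
    omega

/-- Kummer's theorem: the right-hand side says that adding the `f j` in base `p` produces no
carry. -/
theorem Prime.not_dvd_multinomial_iff {ι : Type*} (hp : p.Prime) (s : Finset ι) (f : ι → ℕ) :
    ¬ p ∣ multinomial s f ↔ ∀ i, (∑ j ∈ s, f j) % p ^ i = ∑ j ∈ s, f j % p ^ i := by
  induction s using Finset.cons_induction with
  | empty => simp [hp.ne_one]
  | cons a s ha ih =>
    rw [multinomial_cons, hp.dvd_mul, not_or, ih, hp.not_dvd_choose_add_iff, ← forall_and]
    refine forall_congr' fun i => ?_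
    have hsum : (∑ j ∈ s, f j) % p ^ i ≤ ∑ j ∈ s, f j % p ^ i :=
      (sum_nat_mod _ _ _).trans_le (mod_le _ _)
    have hadd := add_mod (f a) (∑ j ∈ s, f j) (p ^ i)
    have hlt := mod_lt (f a % p ^ i + (∑ j ∈ s, f j) % p ^ i) (pow_pos hp.pos i)
    have hle := mod_le (f a % p ^ i + (∑ j ∈ s, f j) % p ^ i) (p ^ i)
    rw [sum_cons, sum_cons]
    constructor
    · rintro ⟨hcarry, hs⟩
      rw [hadd, mod_eq_of_lt hcarry, hs]
    · intro h
      omega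

theorem forall_sum_mod_pow_eq_iff {ι : Type*} (hp : 0 < p) (s : Finset ι) (f : ι → ℕ) :
    (∀ i, (∑ j ∈ s, f j) % p ^ i = ∑ j ∈ s, f j % p ^ i) ↔
      ∀ l, ∑ j ∈ s, f j / p ^ l % p = (∑ j ∈ s, f j) / p ^ l % p := by
  constructor
  · intro h l
    have h2 := h (l + 1)
    simp_rw [mod_pow_succ, sum_add_distrib, ← mul_sum, h l] at h2
    exact (Nat.eq_of_mul_eq_mul_left (pow_pos hp l) (Nat.add_left_cancel h2)).symm
  · intro h i
    induction i with
    | zero => simp [mod_one]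
    | succ i ih =>
      rw [mod_pow_succ, ih, ← h i, mul_sum, ← sum_add_distrib]
      simp_rw [mod_pow_succ]

theorem sum_div_pow_mod_mul_pow {L x : ℕ} (hx : x < p ^ L) :
    ∑ l : Fin L, x / p ^ (l : ℕ) % p * p ^ (l : ℕ) = x :=
  congrArg Fin.val (finFunctionFinEquiv.apply_symm_apply ⟨x, hx⟩)

theorem sum_mul_pow_div_pow_mod {L : ℕ} {c : Fin L → ℕ} (hc : ∀ l, c l < p) (k : Fin L) :
    (∑ l : Fin L, c l * p ^ (l : ℕ)) / p ^ (k : ℕ) % p = c k :=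
  congrArg (fun d => (d k : ℕ)) (finFunctionFinEquiv.symm_apply_apply fun l => ⟨c l, hc l⟩)

/-- The `p`-adic digits of the parts give a bijection between the compositions of `t` with
multinomial coefficient prime to `p` and the tuples of compositions of the digits of `t`. -/
theorem card_filter_not_dvd_multinomial_s8 (hp : p.Prime) {ι : Type*} [Fintype ι] [DecidableEq ι]
    {t L : ℕ} (htL : t < p ^ L) :
    #{α ∈ piAntidiag (univ : Finset ι) t | ¬ p ∣ multinomial univ α} =
      ∏ l : Fin L, #(piAntidiag (univ : Finset ι) (t / p ^ (l : ℕ) % p)) := by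
  have hS : ∀ α : ι → ℕ,
      α ∈ {α ∈ piAntidiag (univ : Finset ι) t | ¬ p ∣ multinomial univ α} ↔
      ∑ i, α i = t ∧ ∀ l, ∑ i, α i / p ^ l % p = t / p ^ l % p := by
    intro α
    simp only [mem_filter, mem_piAntidiag, mem_univ, implies_true, and_true,
      hp.not_dvd_multinomial_iff, forall_sum_mod_pow_eq_iff hp.pos]
    exact and_congr_right fun h => by rw [h]
  have hT : ∀ e : Fin L → ι → ℕ,
      e ∈ Fintype.piFinset (fun l : Fin L => piAntidiag univ (t / p ^ (l : ℕ) % p)) ↔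
        ∀ l : Fin L, ∑ i, e l i = t / p ^ (l : ℕ) % p := by
    simp [Fintype.mem_piFinset, mem_piAntidiag]
  have hle : ∀ {α : ι → ℕ}, ∑ i, α i = t → ∀ i, α i ≤ t := fun {α} h i =>
    h ▸ single_le_sum (fun _ _ => Nat.zero_le _) (mem_univ i)
  rw [← Fintype.card_piFinset]
  refine card_nbij' (fun α l i => α i / p ^ (l : ℕ) % p) (fun e i => ∑ l, e l i * p ^ (l : ℕ))
    (fun α hα => (hT _).2 fun l => ((hS α).1 hα).2 l) (fun e he => ?_)
    (fun α hα => funext fun i => sum_div_pow_mod_mul_pow ((hle ((hS α).1 hα).1 i).trans_lt htL))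
    (fun e he => ?_)
  all_goals
    have he := (hT e).1 he
    have hlt : ∀ l i, e l i < p := fun l i =>
      (single_le_sum (fun _ _ => Nat.zero_le _) (mem_univ i)).trans_lt
        ((he l).trans_lt (mod_lt _ hp.pos))
  · have hsum : ∑ i, ∑ l : Fin L, e l i * p ^ (l : ℕ) = t := by
      rw [sum_comm]
      simp_rw [← sum_mul, he]
      exact sum_div_pow_mod_mul_pow htL
    refine (hS _).2 ⟨hsum, fun l => ?_⟩
    by_cases hl : l < L
    · simp_rw [sum_mul_pow_div_pow_mod (hlt · _) ⟨l, hl⟩]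
      exact he ⟨l, hl⟩
    · have hzero : ∀ x ≤ t, x / p ^ l % p = 0 := fun x hx => by
        rw [div_eq_of_lt ((hx.trans_lt htL).trans_le (pow_le_pow_right₀ hp.one_lt.le
          (not_lt.mp hl))), zero_mod]
      rw [hzero t le_rfl]
      exact sum_eq_zero fun i _ => hzero _ (hle hsum i)
  · exact funext fun l => funext fun i => sum_mul_pow_div_pow_mod (hlt · i) l

theorem card_piAntidiag_univ {ι : Type*} [Fintype ι] [DecidableEq ι] (n : ℕ) :
    #(piAntidiag (univ : Finset ι) n) = (Fintype.card ι + n - 1).choose n := by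
  rw [← map_sym_eq_piAntidiag, card_map, sym_univ, Finset.card_univ, Sym.card_sym_eq_choose]

end Nat

section LinearAlgebra

variable {F M : Type*} [Field F] [AddCommMonoid M] [Module F M]

theorem Submodule.mem_of_forall_sum_pow_smul_mem {W : Submodule F M} {t : ℕ}
    (hF : (t : Cardinal) ≤ Cardinal.mk F) (g : ℕ → M)
    (h : ∀ c : F, ∑ k ∈ range t, c ^ k • g k ∈ W) {k : ℕ} (hk : k < t) : g k ∈ W := by
  obtain ⟨e⟩ : Nonempty (Fin t ↪ F) := by
    rw [← Cardinal.lift_mk_le']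
    simpa using hF
  set V := Matrix.vandermonde fun i => e i
  have hV : Submodule.span F (Set.range fun i => V i) = ⊤ :=
    (Matrix.linearIndependent_rows_of_det_ne_zero
      (Matrix.det_vandermonde_ne_zero_iff.mpr e.injective)).span_eq_top_of_card_eq_finrank'
      (by simp)
  let φ := Fintype.linearCombination F fun j : Fin t => g j
  have hrows : Submodule.span F (Set.range fun i => V i) ≤ W.comap φ := by
    rw [Submodule.span_le]
    rintro _ ⟨i, rfl⟩
    simpa [φ, V, Fintype.linearCombination_apply, Matrix.vandermonde_apply,
      Fin.sum_univ_eq_sum_range (fun j => e i ^ j • g j)] using h (e i)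
  have hsingle : Pi.single ⟨k, hk⟩ (1 : F) ∈ W.comap φ := hrows (hV ▸ Submodule.mem_top)
  simpa [φ, Fintype.linearCombination_apply_single] using hsingle

theorem Module.Basis.finrank_span_image_eq_card_filter [DecidableEq F] {ι : Type*}
    (b : Basis ι F M) {c : ι → F} {v : ι → M} (hv : ∀ i, v i = c i • b i) (s : Finset ι) :
    finrank F (Submodule.span F (v '' s)) = #{i ∈ s | c i ≠ 0} := by
  have hspan : Submodule.span F (v '' s) = Submodule.span F (b '' ↑{i ∈ s | c i ≠ 0}) := by
    apply le_antisymm <;> rw [Submodule.span_le]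
    · rintro _ ⟨i, hi, rfl⟩
      rw [hv]
      by_cases hc : c i = 0
      · simp [hc]
      · exact Submodule.smul_mem _ _ (Submodule.subset_span ⟨i, by simp_all, rfl⟩)
    · rintro _ ⟨i, hi, rfl⟩
      rw [mem_coe, mem_filter] at hi
      rw [← inv_smul_smul₀ hi.2 (b i), ← hv]
      exact Submodule.smul_mem _ _ (Submodule.subset_span ⟨i, hi.1, rfl⟩)
  rw [hspan, Set.image_eq_range]
  exact (finrank_span_eq_card (b.linearIndependent.comp _ Subtype.val_injective)).trans
    (Fintype.card_coe _)

end LinearAlgebra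

namespace MvPolynomial

variable (σ F : Type*) [Fintype σ] [Field F]

noncomputable def powersSpan (t : ℕ) : Submodule F (MvPolynomial σ F) :=
  Submodule.span F {f | ∃ a : σ → F, f = (∑ i, C (a i) * X i) ^ t}

variable {σ F}

theorem X_pow_mem_powersSpan (j : σ) (t : ℕ) :
    (X j : MvPolynomial σ F) ^ t ∈ powersSpan σ F t := by
  classical
  exact Submodule.subset_span ⟨Pi.single j 1, by simp [Pi.single_apply]⟩

theorem one_mem_powersSpan_zero : (1 : MvPolynomial σ F) ∈ powersSpan σ F 0 :=
  Submodule.subset_span ⟨0, (pow_zero _).symm⟩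

/-- Expanding `(ℓ + c X_j)ᵗ` in `c` and interpolating. -/
theorem choose_smul_X_pow_mul_mem_powersSpan {t k : ℕ} (hF : (t : Cardinal) ≤ Cardinal.mk F)
    (j : σ) (hk : k ≤ t) {v : MvPolynomial σ F} (hv : v ∈ powersSpan σ F (t - k)) :
    (t.choose k : F) • (X j ^ k * v) ∈ powersSpan σ F t := by
  classical
  induction hv using Submodule.span_induction with
  | mem v hv =>
    obtain ⟨a, rfl⟩ := hv
    rcases hk.lt_or_eq with hk | rfl
    · refine Submodule.mem_of_forall_sum_pow_smul_mem hF
        (fun k => (t.choose k : F) • (X j ^ k * (∑ i, C (a i) * X i) ^ (t - k))) (fun c => ?_) hk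
      have hshift : ∑ i, C ((a + Pi.single j c : σ → F) i) * X i =
          C c * X j + ∑ i, C (a i) * X i := by
        simp [add_mul, sum_add_distrib, Pi.single_apply, apply_ite C, ite_mul, add_comm]
      have hexp : ∑ k ∈ range t,
            c ^ k • (t.choose k : F) • (X j ^ k * (∑ i, C (a i) * X i) ^ (t - k)) =
          (∑ i, C ((a + Pi.single j c : σ → F) i) * X i) ^ t - c ^ t • X j ^ t := by
        rw [eq_sub_iff_add_eq, hshift, add_pow, sum_range_succ]
        congr 1
        · refine sum_congr rfl fun m _ => ?_
          simp only [smul_eq_C_mul, mul_pow, ← C_eq_coe_nat, map_pow]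
          ring
        · simp [smul_eq_C_mul, mul_pow]
      rw [hexp]
      exact Submodule.sub_mem _ (Submodule.subset_span ⟨_, rfl⟩)
        (Submodule.smul_mem _ _ (X_pow_mem_powersSpan j t))
    · simpa using X_pow_mem_powersSpan j k
  | zero => simp
  | add x y _ _ hx hy => simpa [mul_add] using Submodule.add_mem _ hx hy
  | smul c x _ hx =>
    rw [mul_smul_comm, smul_comm]
    exact Submodule.smul_mem _ c hx

theorem multinomial_smul_prod_X_pow_mem_powersSpan (s : Finset σ) (β : σ → ℕ)
    (hF : ((∑ i ∈ s, β i : ℕ) : Cardinal) ≤ Cardinal.mk F) :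
    (Nat.multinomial s β : F) • ∏ i ∈ s, X i ^ β i ∈ powersSpan σ F (∑ i ∈ s, β i) := by
  classical
  induction s using Finset.induction_on with
  | empty => simpa using one_mem_powersSpan_zero
  | insert j s hj ih =>
    rw [sum_insert hj] at hF ⊢
    have hle : ∑ i ∈ s, β i ≤ β j + ∑ i ∈ s, β i := Nat.le_add_left _ _
    have h := choose_smul_X_pow_mul_mem_powersSpan hF j (Nat.le_add_right (β j) _)
      (v := (Nat.multinomial s β : F) • ∏ i ∈ s, X i ^ β i)
      (by simpa using ih (le_trans (by exact_mod_cast hle) hF))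
    rw [Nat.multinomial_insert hj, prod_insert hj, Nat.cast_mul, mul_smul]
    simpa [mul_smul_comm, mul_assoc] using h

theorem powersSpan_eq_span_multinomial_smul [DecidableEq σ] {t : ℕ}
    (hF : (t : Cardinal) ≤ Cardinal.mk F) :
    powersSpan σ F t = Submodule.span F
      ((fun α : σ → ℕ => (Nat.multinomial univ α : F) • ∏ i, X i ^ α i) ''
        ↑(piAntidiag (univ : Finset σ) t)) := by
  apply le_antisymm <;> rw [powersSpan, Submodule.span_le]
  · rintro _ ⟨a, rfl⟩
    rw [sum_pow_eq_sum_piAntidiag]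
    refine Submodule.sum_mem _ fun α hα => ?_
    have hterm : (Nat.multinomial univ α : MvPolynomial σ F) * ∏ i, (C (a i) * X i) ^ α i =
        (∏ i, a i ^ α i) • ((Nat.multinomial univ α : F) • ∏ i, X i ^ α i) := by
      simp only [mul_pow, prod_mul_distrib, smul_eq_C_mul, ← C_eq_coe_nat, map_prod, map_pow]
      ring
    rw [hterm]
    exact Submodule.smul_mem _ _ (Submodule.subset_span ⟨α, hα, rfl⟩)
  · rintro _ ⟨α, hα, rfl⟩
    obtain ⟨hsum, -⟩ := mem_piAntidiag.mp hα
    subst hsum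
    exact multinomial_smul_prod_X_pow_mem_powersSpan univ α hF

theorem finrank_powersSpan [DecidableEq σ] (p : ℕ) [CharP F p] {t : ℕ}
    (hF : (t : Cardinal) ≤ Cardinal.mk F) :
    finrank F (powersSpan σ F t) =
      #{α ∈ piAntidiag (univ : Finset σ) t | ¬ p ∣ Nat.multinomial univ α} := by
  classical
  obtain ⟨b, hb⟩ : ∃ b : Basis (σ → ℕ) F (MvPolynomial σ F), ∀ α, b α = ∏ i, X i ^ α i :=
    ⟨(basisMonomials σ F).reindex Finsupp.equivFunOnFinite, fun α => by
      simp [monomial_eq, Finsupp.prod_fintype]⟩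
  rw [powersSpan_eq_span_multinomial_smul hF,
    b.finrank_span_image_eq_card_filter (c := fun α => (Nat.multinomial univ α : F))
      (fun α => by rw [hb])]
  simp_rw [ne_eq, CharP.cast_eq_zero_iff F p]

end MvPolynomial

theorem stmt8_general (p : ℕ) (hp : p.Prime) (F : Type*) [Field F] [CharP F p]
    (t m : ℕ) (hF : (t : Cardinal) ≤ Cardinal.mk F) :
    Module.finrank F (Submodule.span F
      {f : MvPolynomial (Fin (m + 1)) F |
        ∃ a : Fin (m + 1) → F, f = (∑ i, MvPolynomial.C (a i) * MvPolynomial.X i) ^ t})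
      = ∏ l ∈ Finset.range (t + 1),
          (m + (Nat.digits p t).getD l 0).choose ((Nat.digits p t).getD l 0) := by
  have htL : t < p ^ (t + 1) :=
    (Nat.lt_pow_self hp.one_lt).trans (Nat.pow_lt_pow_right hp.one_lt (lt_add_one t))
  rw [← MvPolynomial.powersSpan, MvPolynomial.finrank_powersSpan p hF,
    Nat.card_filter_not_dvd_multinomial_s8 hp htL,
    Fin.prod_univ_eq_prod_range (fun l => #(piAntidiag univ (t / p ^ l % p)))]
  refine prod_congr rfl fun l _ => ?_
  rw [Nat.card_piAntidiag_univ, Nat.getD_digits _ _ hp.two_le, Fintype.card_fin,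
    add_right_comm, Nat.add_sub_cancel]

/-- Over a field F of prime characteristic p with |F| ≥ t, the subspace of the t-th
symmetric power of an (m+1)-dimensional space spanned by the t-th powers of vectors has
dimension Π_λ C(m + t_λ, t_λ), where t_λ are the base-p digits of t. The symmetric power
is modelled as the space of polynomials in m+1 variables, a vector with coordinates a
corresponding to the linear form Σ a_i X_i, so that a^t is the t-th power of that form. -/
theorem stmt8 (p : ℕ) (hp : p.Prime) (F : Type*) [Field F] [CharP F p]
    (t m : ℕ) (ht : 1 ≤ t) (hF : (t : Cardinal) ≤ Cardinal.mk F) :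
    Module.finrank F (Submodule.span F
      {f : MvPolynomial (Fin (m + 1)) F |
        ∃ a : Fin (m + 1) → F, f = (∑ i, MvPolynomial.C (a i) * MvPolynomial.X i) ^ t})
      = ∏ l ∈ Finset.range (t + 1),
          (m + (Nat.digits p t).getD l 0).choose ((Nat.digits p t).getD l 0) :=
  stmt8_general p hp F t m hF
end

section
/- Let p be a prime with t ≥ p and m ≥ 2, and let F be a field of characteristic p with |F| ≥ t. Then the span of {a^t : a ∈ V} in Sym^t(V), where dim V = m+1, is a proper subspace of Sym^t(V); equivalently, the nucleus of the Veronese variety V_m^t is non-empty. -/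
/-!
The coefficient of `X^d` in `(∑ i, a i • X i) ^ t` is `multinomial d * ∏ i, a i ^ d i`. In
characteristic `p` the functional `coeff d` therefore kills every `t`-th power as soon as
`p ∣ multinomial d`, while it does not vanish on the homogeneous form `X^d`. With three variables
and `t ≥ p` such a `d` exists: `d = (1, p - 1, t - p)`, since the multinomial coefficient is
divisible by `choose p 1 = p`.
-/

theorem Nat.choose_add_dvd_multinomial {α : Type*} [DecidableEq α] {s : Finset α}
    {a b : α} (hab : a ≠ b) (ha : a ∈ s) (hb : b ∈ s) (f : α → ℕ) :
    (f a + f b).choose (f a) ∣ Nat.multinomial s f := by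
  set r := (s.erase a).erase b
  have hs : s = insert a (insert b r) := by
    rw [Finset.insert_erase (Finset.mem_erase.2 ⟨hab.symm, hb⟩), Finset.insert_erase ha]
  have hbr : b ∉ r := Finset.notMem_erase b _
  have har : a ∉ insert b r := by
    simp [r, hab]
  rw [hs, Nat.multinomial_insert har, Nat.multinomial_insert hbr, Finset.sum_insert hbr,
    ← mul_assoc, ← add_assoc]
  -- Merge `a` and `b` first: `choose N x * choose (N - x) y = choose N (x + y) * choose (x + y) x`.
  refine Dvd.dvd.mul_right (Dvd.intro_left ((f a + f b + ∑ i ∈ r, f i).choose (f a + f b)) ?_) _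
  rw [Nat.choose_mul (Nat.le_add_right _ _), Nat.add_sub_cancel_left, add_assoc,
    Nat.add_sub_cancel_left]

theorem Nat.Prime.dvd_multinomial {α : Type*} [DecidableEq α] {p : ℕ} (hp : p.Prime)
    {s : Finset α} {a b : α} (hab : a ≠ b) (ha : a ∈ s) (hb : b ∈ s) {f : α → ℕ}
    (hfa : f a ≠ 0) (hfb : f b ≠ 0) (hsum : f a + f b = p) :
    p ∣ Nat.multinomial s f := by
  have h := Nat.choose_add_dvd_multinomial hab ha hb f
  rw [hsum] at h
  exact (hp.dvd_choose_self hfa (by omega)).trans h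

namespace MvPolynomial

variable {σ R : Type*} [Fintype σ] [CommSemiring R]

theorem coeff_linearForm_pow_eq_zero (p : ℕ) [CharP R p] {d : σ →₀ ℕ}
    (hd : p ∣ d.multinomial) (a : σ → R) (n : ℕ) :
    coeff d ((∑ i, C (a i) * X i) ^ n) = 0 := by
  simp_rw [← smul_eq_C_mul]
  rw [coeff_linearCombination_X_pow_of_fintype, (CharP.cast_eq_zero_iff R p _).2 hd]
  simp

theorem linearForm_pow_mem_homogeneousSubmodule (a : σ → R) (n : ℕ) :
    (∑ i, C (a i) * X i) ^ n ∈ homogeneousSubmodule σ R n := by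
  have hlin : IsHomogeneous (∑ i, C (a i) * X i) 1 :=
    IsHomogeneous.sum _ _ _ fun i _ => by
      simpa using (isHomogeneous_C σ (a i)).mul (isHomogeneous_X R i)
  simpa using hlin.pow n

theorem span_linearForm_pow_lt_homogeneousSubmodule (p : ℕ) [CharP R p] (hp : p ≠ 1)
    {n : ℕ} {d : σ →₀ ℕ} (hdeg : d.degree = n) (hd : p ∣ d.multinomial) :
    Submodule.span R {f | ∃ a : σ → R, f = (∑ i, C (a i) * X i) ^ n}
      < homogeneousSubmodule σ R n := by
  have := CharP.nontrivial_of_char_ne_one (R := R) hp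
  have hspan_le_ker : Submodule.span R {f | ∃ a : σ → R, f = (∑ i, C (a i) * X i) ^ n}
      ≤ LinearMap.ker (lcoeff R d) := by
    rw [Submodule.span_le]
    rintro _ ⟨a, rfl⟩
    exact coeff_linearForm_pow_eq_zero p hd a n
  refine SetLike.lt_iff_le_and_exists.2 ⟨?_, monomial d 1, isHomogeneous_monomial 1 hdeg, ?_⟩
  · rw [Submodule.span_le]
    rintro _ ⟨a, rfl⟩
    exact linearForm_pow_mem_homogeneousSubmodule a n
  · intro hmem
    have h := hspan_le_ker hmem
    classical
    rw [LinearMap.mem_ker, lcoeff_apply, coeff_monomial, if_pos rfl] at h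
    exact one_ne_zero h

end MvPolynomial

theorem Finsupp.exists_degree_eq_prime_dvd_multinomial {σ : Type*} {i j k : σ}
    (hij : i ≠ j) (hik : i ≠ k) (hjk : j ≠ k) {p t : ℕ} (hp : p.Prime) (ht : p ≤ t) :
    ∃ d : σ →₀ ℕ, d.degree = t ∧ p ∣ d.multinomial := by
  classical
  have hp2 := hp.two_le
  set d := single i 1 + single j (p - 1) + single k (t - p)
  have hdi : d i = 1 := by simp [d, hij, hik]
  have hdj : d j = p - 1 := by simp [d, hij.symm, hjk]
  refine ⟨d, ?_, ?_⟩
  · simp only [d, map_add, degree_single]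
    omega
  · rw [multinomial_eq]
    exact hp.dvd_multinomial hij (by simp [hdi]) (by simp [hdj]; omega)
      (by omega) (by omega) (by omega)

theorem stmt11_general (p : ℕ) (hp : p.Prime) (t m : ℕ) (ht : p ≤ t) (hm : 2 ≤ m)
    (F : Type*) [Field F] [CharP F p] :
    Submodule.span F
      {f : MvPolynomial (Fin (m + 1)) F |
        ∃ a : Fin (m + 1) → F, f = (∑ i, MvPolynomial.C (a i) * MvPolynomial.X i) ^ t}
      < MvPolynomial.homogeneousSubmodule (Fin (m + 1)) F t := by
  obtain ⟨d, hdeg, hd⟩ := Finsupp.exists_degree_eq_prime_dvd_multinomial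
    (i := (⟨0, by omega⟩ : Fin (m + 1))) (j := ⟨1, by omega⟩) (k := ⟨2, by omega⟩)
    (by simp [Fin.ext_iff]) (by simp [Fin.ext_iff]) (by simp [Fin.ext_iff]) hp ht
  exact MvPolynomial.span_linearForm_pow_lt_homogeneousSubmodule p hp.ne_one hdeg hd

/-- For a prime p with t ≥ p, m ≥ 2, and F of characteristic p with |F| ≥ t, the span of
the t-th powers of vectors is a proper subspace of the t-th symmetric power of an
(m+1)-dimensional space (modelled as homogeneous degree-t polynomials); equivalently the
nucleus of the Veronese variety V_m^t is non-empty. -/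
theorem stmt11 (p : ℕ) (hp : p.Prime) (t m : ℕ) (ht : p ≤ t) (hm : 2 ≤ m)
    (F : Type*) [Field F] [CharP F p] (hF : (t : Cardinal) ≤ Cardinal.mk F) :
    Submodule.span F
      {f : MvPolynomial (Fin (m + 1)) F |
        ∃ a : Fin (m + 1) → F, f = (∑ i, MvPolynomial.C (a i) * MvPolynomial.X i) ^ t}
      < MvPolynomial.homogeneousSubmodule (Fin (m + 1)) F t :=
  stmt11_general p hp t m ht hm F
end

section
/- Let p be a prime with 2 ≤ t < p or with m = 1 and t = t_J p^J − 1 (1 ≤ t_J < p), and let F be a field of characteristic p with |F| ≥ t and V an (m+1)-dimensional F-vector space. Then {a^t : a ∈ V} spans Sym^t(V). -/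
/-!
Expanding `P * (c f + g) ^ s = ∑ₖ cᵏ (s.choose k) P fᵏ gˢ⁻ᵏ` at `s + 1` distinct values of `c` and
inverting the Vandermonde matrix puts every `(s.choose k) P fᵏ gˢ⁻ᵏ` into the span of the values.
Peeling off one variable at a time, the monomial `Xᵉ` of degree `t` lands in the span of the `t`-th
powers of linear forms up to the factor `multinomial e`. So the powers span all of degree `t` once
`F` has more than `t` elements and no multinomial coefficient of weight `t` vanishes in `F`. For
`t < p` these coefficients divide `t!`; for two variables and `t = t_J p ^ J - 1` they are binomial
coefficients `t.choose k`, prime to `p` by Lucas's theorem since every base-`p` digit of `t` except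
the leading one is `p - 1`. Finally `|F| ≥ t` upgrades to `|F| > t` because a finite `F` has `p ^ n`
elements with `n ≥ 1`, and in both cases `t` is not of that form.
-/

open MvPolynomial Cardinal

namespace Nat

lemma Prime.not_dvd_choose_of_lt {p n k : ℕ} (hp : p.Prime) (hn : n < p) (hk : k ≤ n) :
    ¬ p ∣ n.choose k := fun h ↦
  (hp.dvd_factorial.mp (h.trans ⟨k.factorial * (n - k).factorial, by
    rw [← mul_assoc, choose_mul_factorial_mul_factorial hk]⟩)).not_gt hn

lemma Prime.not_dvd_multinomial_of_sum_lt {ι : Type*} {p : ℕ} (hp : p.Prime) (s : Finset ι)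
    (f : ι → ℕ) (h : ∑ i ∈ s, f i < p) : ¬ p ∣ multinomial s f := fun hdvd ↦
  (hp.dvd_factorial.mp (hdvd.trans (Dvd.intro_left _ (multinomial_spec s f)))).not_gt h

lemma Prime.not_dvd_choose_mul_add_pred {p u : ℕ} (hp : p.Prime)
    (hu : ∀ k ≤ u, ¬ p ∣ u.choose k) {k : ℕ} (hk : k ≤ p * u + (p - 1)) :
    ¬ p ∣ (p * u + (p - 1)).choose k := by
  have := Fact.mk hp
  have hp0 := hp.pos
  have hmod : (p * u + (p - 1)) % p = p - 1 := by
    rw [mul_add_mod]; exact mod_eq_of_lt (by omega)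
  have hdiv : (p * u + (p - 1)) / p = u := by
    rw [mul_add_div hp0, div_eq_of_lt (by omega), add_zero]
  have hkmod := mod_lt k hp0
  rw [Choose.choose_modEq_choose_mod_mul_choose_div_nat.dvd_iff dvd_rfl, hmod, hdiv,
    hp.dvd_mul, not_or]
  exact ⟨hp.not_dvd_choose_of_lt (by omega) (by omega),
    hu _ (hdiv ▸ Nat.div_le_div_right hk)⟩

lemma Prime.not_dvd_choose_mul_pow_sub_one {p a : ℕ} (hp : p.Prime) (ha₀ : 1 ≤ a) (ha : a < p)
    (J : ℕ) {k : ℕ} (hk : k ≤ a * p ^ J - 1) : ¬ p ∣ (a * p ^ J - 1).choose k := by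
  induction J generalizing k with
  | zero =>
    rw [pow_zero, mul_one] at hk ⊢
    exact hp.not_dvd_choose_of_lt (by omega) hk
  | succ J ih =>
    obtain ⟨x, hx⟩ : ∃ x, a * p ^ J = x + 1 :=
      exists_eq_add_one.mpr (by have := hp.pos; positivity)
    obtain ⟨q, rfl⟩ : ∃ q, p = q + 1 := exists_eq_add_one.mpr hp.pos
    have hrec : a * (q + 1) ^ (J + 1) - 1 = (q + 1) * (a * (q + 1) ^ J - 1) + (q + 1 - 1) := by
      rw [pow_succ, ← mul_assoc, hx]; simp only [add_tsub_cancel_right]; ring_nf; omega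
    rw [hrec] at hk ⊢
    exact hp.not_dvd_choose_mul_add_pred (fun k hk ↦ ih hk) hk

lemma multinomial_univ_fin_two (f : Fin 2 → ℕ) :
    multinomial Finset.univ f = (f 0 + f 1).choose (f 0) :=
  binomial_eq_choose (f := f) (show (0 : Fin 2) ≠ 1 by decide)

end Nat

lemma Cardinal.nonempty_fin_succ_embedding_of_natCast_lt {α : Type*} {n : ℕ}
    (h : (n : Cardinal) < #α) :
    Nonempty (Fin (n + 1) ↪ α) :=
  lift_mk_le'.mp (by simpa [Order.add_one_le_iff] using h)

section

variable {F : Type*} [Field F]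

lemma Submodule.mem_of_forall_sum_pow_smul_mem_s12 {M : Type*} [AddCommGroup M] [Module F M]
    (N : Submodule F M) {n : ℕ} {c : Fin n → F} (hc : Function.Injective c) (v : Fin n → M)
    (h : ∀ j, ∑ i : Fin n, c j ^ (i : ℕ) • v i ∈ N) (k : Fin n) : v k ∈ N := by
  set A := Matrix.vandermonde c
  have hA : IsUnit A.det := (Matrix.det_vandermonde_ne_zero_iff.mpr hc).isUnit
  have hv : v k = ∑ j, A⁻¹ k j • ∑ i, A j i • v i := by
    simp_rw [Finset.smul_sum, smul_smul]
    rw [Finset.sum_comm]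
    simp_rw [← Finset.sum_smul, ← Matrix.mul_apply, Matrix.nonsing_inv_mul A hA, Matrix.one_apply,
      ite_smul, one_smul, zero_smul, Finset.sum_ite_eq, Finset.mem_univ, if_true]
  rw [hv]
  exact N.sum_mem fun j _ ↦ N.smul_mem _ (h j)

lemma Submodule.mul_pow_mul_pow_mem {R : Type*} [CommRing R] [Algebra F R] (N : Submodule F R)
    (P f g : R) {s k : ℕ} (hk : k ≤ s) (hF : (s : Cardinal) < #F)
    (hchoose : (s.choose k : F) ≠ 0) (H : ∀ c : F, P * (algebraMap F R c * f + g) ^ s ∈ N) :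
    P * f ^ k * g ^ (s - k) ∈ N := by
  obtain ⟨c⟩ := Cardinal.nonempty_fin_succ_embedding_of_natCast_lt hF
  have hexpand : ∀ j, P * (algebraMap F R (c j) * f + g) ^ s =
      ∑ i : Fin (s + 1), c j ^ (i : ℕ) • ((s.choose i : F) • (P * f ^ (i : ℕ) * g ^ (s - i))) := by
    intro j
    rw [add_pow, Finset.mul_sum, ← Fin.sum_univ_eq_sum_range]
    refine Finset.sum_congr rfl fun i _ ↦ ?_
    simp only [Algebra.smul_def, map_pow, map_natCast]
    ring
  have := N.mem_of_forall_sum_pow_smul_mem_s12 c.injective _ (fun j ↦ hexpand j ▸ H (c j))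
    ⟨k, Nat.lt_succ_of_le hk⟩
  simpa [hchoose] using (N.smul_mem_iff hchoose).mp this

lemma MvPolynomial.mul_prod_X_pow_mem {σ : Type*} (N : Submodule F (MvPolynomial σ F))
    (A : Finset σ) (e : σ → ℕ) (hF : ((∑ i ∈ A, e i : ℕ) : Cardinal) < #F)
    (he : (Nat.multinomial A e : F) ≠ 0) (P : MvPolynomial σ F)
    (H : ∀ a : σ → F, P * (∑ i ∈ A, C (a i) * X i) ^ (∑ i ∈ A, e i) ∈ N) :
    P * ∏ i ∈ A, X i ^ e i ∈ N := by
  classical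
  induction A using Finset.induction_on generalizing P with
  | empty => simpa using H 0
  | insert j A hj ih =>
    rw [Finset.sum_insert hj] at hF H
    rw [Nat.multinomial_insert hj, Nat.cast_mul, mul_ne_zero_iff] at he
    rw [Finset.prod_insert hj, ← mul_assoc]
    refine ih (hF.trans_le' (by gcongr; omega)) he.2 _ fun a ↦ ?_
    have hcoeff := N.mul_pow_mul_pow_mem P (X j) (∑ i ∈ A, C (a i) * X i)
      (Nat.le_add_right _ _) hF he.1 fun c ↦ ?_
    · rwa [Nat.add_sub_cancel_left] at hcoeff
    · convert H (Function.update a j c) using 3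
      rw [Finset.sum_insert hj, Function.update_self, algebraMap_eq]
      congr 1
      exact Finset.sum_congr rfl fun i hi ↦ by
        rw [Function.update_of_ne (ne_of_mem_of_not_mem hi hj)]

lemma MvPolynomial.isHomogeneous_sum_C_mul_X_pow {σ R : Type*} [CommSemiring R] [Fintype σ]
    (a : σ → R) (t : ℕ) : ((∑ i, C (a i) * X i) ^ t : MvPolynomial σ R).IsHomogeneous t := by
  simpa using (IsHomogeneous.sum _ _ 1 fun i _ ↦
    (isHomogeneous_C_mul_X (a i) i)).pow t

lemma MvPolynomial.homogeneousSubmodule_le_of_monomial_mem {σ R : Type*} [CommSemiring R]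
    {t : ℕ} {N : Submodule R (MvPolynomial σ R)}
    (h : ∀ d : σ →₀ ℕ, d.degree = t → monomial d 1 ∈ N) : homogeneousSubmodule σ R t ≤ N := by
  rw [homogeneousSubmodule_eq_finsupp_supported, AddMonoidAlgebra.supported_eq_span_single,
    Submodule.span_le]
  rintro _ ⟨d, hd, rfl⟩
  exact h d hd

theorem MvPolynomial.span_pow_eq_homogeneousSubmodule {σ : Type*} [Fintype σ] {t : ℕ}
    (hF : (t : Cardinal) < #F)
    (hmultinomial : ∀ d : σ →₀ ℕ, d.degree = t → (Nat.multinomial Finset.univ d : F) ≠ 0) :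
    Submodule.span F {f : MvPolynomial σ F | ∃ a : σ → F, f = (∑ i, C (a i) * X i) ^ t} =
      homogeneousSubmodule σ F t := by
  refine le_antisymm (Submodule.span_le.mpr ?_)
    (homogeneousSubmodule_le_of_monomial_mem fun d hd ↦ ?_)
  · rintro _ ⟨a, rfl⟩
    exact isHomogeneous_sum_C_mul_X_pow a t
  · have hsum : ∑ i, d i = t := by rwa [← Finsupp.degree_eq_sum]
    convert mul_prod_X_pow_mem _ Finset.univ d (hsum ▸ hF) (hmultinomial d hd) 1 fun a ↦ ?_
    · simp [monomial_eq, Finsupp.prod_fintype]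
    · rw [hsum, one_mul]
      exact Submodule.subset_span ⟨a, rfl⟩

end

lemma natCast_lt_mk_of_charP {F : Type*} [Field F] {p t : ℕ} [CharP F p] (hp : p.Prime)
    (ht : t < p ∨ p ∣ t + 1) (hF : (t : Cardinal) ≤ #F) : (t : Cardinal) < #F := by
  rcases finite_or_infinite F with hfin | hinf
  · have := Fintype.ofFinite F
    obtain ⟨n, -, hcard⟩ := FiniteField.card F p
    rw [mk_fintype, Nat.cast_le] at hF
    rw [mk_fintype, Nat.cast_lt]
    refine hF.lt_of_ne fun heq ↦ ?_
    have hpt : p ∣ t := heq ▸ hcard ▸ dvd_pow_self p n.ne_zero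
    rcases ht with ht | ht
    · exact (heq ▸ hcard ▸ Nat.le_self_pow n.ne_zero p).not_gt ht
    · exact hp.one_lt.ne' (Nat.dvd_one.mp ((Nat.dvd_add_right hpt).mp ht))
  · exact (natCast_lt_aleph0 (n := t)).trans_le (aleph0_le_mk F)

/-- If p is a prime with 2 ≤ t < p, or m = 1 and t = t_J·p^J − 1 with 1 ≤ t_J < p, and F
has characteristic p with |F| ≥ t, then the t-th powers of vectors span the t-th symmetric
power of an (m+1)-dimensional space (modelled as homogeneous degree-t polynomials). -/
theorem stmt12 (p : ℕ) (hp : p.Prime) (t m : ℕ)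
    (hcase : (2 ≤ t ∧ t < p) ∨
      (m = 1 ∧ ∃ J tJ : ℕ, 1 ≤ tJ ∧ tJ < p ∧ t + 1 = tJ * p ^ J))
    (F : Type*) [Field F] [CharP F p] (hF : (t : Cardinal) ≤ Cardinal.mk F) :
    Submodule.span F
      {f : MvPolynomial (Fin (m + 1)) F |
        ∃ a : Fin (m + 1) → F, f = (∑ i, MvPolynomial.C (a i) * MvPolynomial.X i) ^ t}
      = MvPolynomial.homogeneousSubmodule (Fin (m + 1)) F t := by
  refine span_pow_eq_homogeneousSubmodule (natCast_lt_mk_of_charP hp ?_ hF) fun d hd ↦ ?_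
  · rcases hcase with ⟨-, htp⟩ | ⟨-, _ | J, tJ, -, htJ, ht⟩
    · exact .inl htp
    · rw [pow_zero, mul_one] at ht
      exact .inl (by omega)
    · exact .inr (ht ▸ dvd_mul_of_dvd_right (dvd_pow_self p J.succ_ne_zero) tJ)
  · rw [Ne, CharP.cast_eq_zero_iff F p]
    rw [Finsupp.degree_eq_sum] at hd
    rcases hcase with ⟨-, htp⟩ | ⟨rfl, J, tJ, htJ₀, htJ, ht⟩
    · exact hp.not_dvd_multinomial_of_sum_lt _ _ (hd ▸ htp)
    · rw [Fin.sum_univ_two] at hd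
      rw [Nat.multinomial_univ_fin_two, hd, show t = tJ * p ^ J - 1 by omega]
      exact hp.not_dvd_choose_mul_pow_sub_one htJ₀ htJ J (by omega)
end

section
/- Let p be a prime and write t = Σ_λ t_λ p^λ in base p. Then Π_λ C(m + t_λ, t_λ) ≤ C(m + t, t), with equality if and only if every multinomial coefficient t!/(e_0!···e_m!) with e_0 + ... + e_m = t is coprime to p. -/
/-!
Both sides count tuples `e : Fin (m + 1) → ℕ` with `∑ e = t`: the binomial counts all of them,
the product counts those whose base-`p` addition is carry-free (split off the lowest digit,
`e ↦ (e % p, e / p)`, and recurse on `t / p`). By Legendre's formula, `p` divides the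
multinomial coefficient of `e` exactly when `∑ⱼ ⌊eⱼ / pⁱ⌋ < ⌊t / pⁱ⌋` for some `i`, that
is, exactly when adding the `eⱼ` in base `p` produces a carry.
-/

open Finset

lemma card_antidiagonalTuple (k n : ℕ) :
    #(Nat.antidiagonalTuple k n) = (k + n - 1).choose n := by
  classical
  rw [← piAntidiag_univ_fin_eq_antidiagonalTuple, ← map_sym_eq_piAntidiag, card_map,
    sym_univ, card_univ, Sym.card_sym_eq_choose, Fintype.card_fin]

lemma sum_div_le_div_sum {ι : Type*} (s : Finset ι) (f : ι → ℕ) (c : ℕ) :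
    ∑ j ∈ s, f j / c ≤ (∑ j ∈ s, f j) / c := by
  induction s using Finset.cons_induction with
  | empty => simp
  | cons a s _ ih =>
    rw [sum_cons, sum_cons]
    exact (Nat.add_le_add_left ih _).trans Nat.div_add_div_le_add_div

theorem factorization_multinomial {p : ℕ} (hp : p.Prime) {ι : Type*} (s : Finset ι)
    (e : ι → ℕ) {b : ℕ} (hb : Nat.log p (∑ j ∈ s, e j) < b) :
    (Nat.multinomial s e).factorization p
      = ∑ i ∈ Ico 1 b, ((∑ j ∈ s, e j) / p ^ i - ∑ j ∈ s, e j / p ^ i) := by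
  have hlog (j) (hj : j ∈ s) : Nat.log p (e j) < b :=
    (Nat.log_mono_right (single_le_sum (fun _ _ => Nat.zero_le _) hj)).trans_lt hb
  have hval := congrArg (fun n => n.factorization p) (Nat.multinomial_spec s e)
  simp only [Nat.factorization_mul (prod_ne_zero_iff.mpr fun j _ => (e j).factorial_ne_zero)
      (Nat.multinomial_pos s e).ne', Nat.factorization_prod fun j _ => (e j).factorial_ne_zero,
    Finsupp.add_apply, Finsupp.finsetSum_apply, Nat.factorization_factorial hp hb] at hval
  rw [sum_congr rfl fun j hj => Nat.factorization_factorial hp (hlog j hj), sum_comm] at hval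
  rw [sum_tsub_distrib _ fun i _ => sum_div_le_div_sum s e (p ^ i)]
  omega

theorem coprime_multinomial_iff {p : ℕ} (hp : p.Prime) {ι : Type*} (s : Finset ι)
    (e : ι → ℕ) :
    (Nat.multinomial s e).Coprime p ↔
      ∀ i, ∑ j ∈ s, e j / p ^ i = (∑ j ∈ s, e j) / p ^ i := by
  rw [Nat.coprime_comm, hp.coprime_iff_not_dvd, hp.dvd_iff_one_le_factorization
    (Nat.multinomial_pos s e).ne', not_le, Nat.lt_one_iff,
    factorization_multinomial hp s e (Nat.lt_succ_of_le (Nat.log_le_self p _)), sum_eq_zero_iff]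
  have hle (i) := sum_div_le_div_sum s e (p ^ i)
  generalize ht : ∑ j ∈ s, e j = t at *
  have hlarge (i) (hi : t + 1 ≤ i) : t / p ^ i = 0 :=
    Nat.div_eq_of_lt <|
      (Nat.lt_pow_self hp.one_lt).trans_le (Nat.pow_le_pow_right hp.pos (by omega))
  refine ⟨fun h i => ?_, fun h i _ => by rw [h i, Nat.sub_self]⟩
  rcases Nat.lt_or_ge i (t + 1) with hi | hi
  · rcases i.eq_zero_or_pos with rfl | hi0
    · simpa using ht
    · have := h i (mem_Ico.mpr ⟨hi0, hi⟩)
      have := hle i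
      omega
  · have := hle i
    have := hlarge i hi
    omega

open Classical in
/-- Tuples summing to `t` whose base-`p` addition is carry-free, expressed through the floors
`⌊eⱼ / pⁱ⌋` of Legendre's formula rather than through digits. -/
noncomputable def carryFreeTuples (p k t : ℕ) : Finset (Fin k → ℕ) :=
  (Nat.antidiagonalTuple k t).filter fun e => ∀ i, ∑ j, e j / p ^ i = t / p ^ i

section carryFreeTuples

variable {p k t : ℕ}

lemma mem_carryFreeTuples {e : Fin k → ℕ} :
    e ∈ carryFreeTuples p k t ↔ ∀ i, ∑ j, e j / p ^ i = t / p ^ i := by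
  simp only [carryFreeTuples, mem_filter, Nat.mem_antidiagonalTuple, and_iff_right_iff_imp]
  intro h
  simpa using h 0

lemma carryFreeTuples_subset_antidiagonalTuple :
    carryFreeTuples p k t ⊆ Nat.antidiagonalTuple k t :=
  fun e he => Nat.mem_antidiagonalTuple.mpr (by simpa using mem_carryFreeTuples.mp he 0)

lemma carryFreeTuples_zero_right : carryFreeTuples p k 0 = {0} := by
  refine eq_singleton_iff_unique_mem.mpr
    ⟨mem_carryFreeTuples.mpr fun i => by simp, fun e he => ?_⟩
  simpa [Nat.antidiagonalTuple_zero_right] using carryFreeTuples_subset_antidiagonalTuple he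

lemma mem_carryFreeTuples_iff_mod_div {e : Fin k → ℕ} :
    e ∈ carryFreeTuples p k t ↔ (fun j => e j % p) ∈ Nat.antidiagonalTuple k (t % p) ∧
      (fun j => e j / p) ∈ carryFreeTuples p k (t / p) := by
  simp only [mem_carryFreeTuples, Nat.mem_antidiagonalTuple, Nat.div_div_eq_div_mul, ← pow_succ']
  have hsum : ∑ j, e j = p * ∑ j, e j / p + ∑ j, e j % p := by
    rw [mul_sum, ← sum_add_distrib]
    exact sum_congr rfl fun j _ => (Nat.div_add_mod (e j) p).symm
  have ht := (Nat.div_add_mod t p).symm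
  constructor
  · intro h
    refine ⟨?_, fun i => h (i + 1)⟩
    have h0 := h 0
    have h1 := h 1
    simp only [pow_zero, pow_one, Nat.div_one] at h0 h1
    rw [h1] at hsum
    omega
  · rintro ⟨hmod, hdiv⟩ (_ | i)
    · have h0 := hdiv 0
      simp only [zero_add, pow_zero, pow_one, Nat.div_one] at h0 ⊢
      rw [h0] at hsum
      omega
    · exact hdiv i

lemma card_carryFreeTuples (hp : 0 < p) :
    #(carryFreeTuples p k t) = (k + t % p - 1).choose (t % p) * #(carryFreeTuples p k (t / p)) := by
  have hdigit {r : Fin k → ℕ} (hr : r ∈ Nat.antidiagonalTuple k (t % p)) (a : Fin k → ℕ) :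
      (fun j => (p * a j + r j) % p) = r ∧ (fun j => (p * a j + r j) / p) = a := by
    have hlt (j) : r j < p :=
      ((single_le_sum (fun _ _ => Nat.zero_le _) (mem_univ j)).trans_eq
        (Nat.mem_antidiagonalTuple.mp hr)).trans_lt (Nat.mod_lt _ hp)
    refine ⟨funext fun j => ?_, funext fun j => ?_⟩
    · rw [mul_comm, Nat.mul_add_mod_of_lt (hlt j)]
    · rw [Nat.mul_add_div hp, Nat.div_eq_of_lt (hlt j), add_zero]
  rw [← card_antidiagonalTuple, ← card_product]
  refine card_nbij' (fun e => (fun j => e j % p, fun j => e j / p))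
    (fun x j => p * x.2 j + x.1 j) (fun e he => ?_) (fun x hx => ?_) (fun e _ => ?_)
    (fun x hx => ?_)
  · exact mem_product.mpr (mem_carryFreeTuples_iff_mod_div.mp he)
  · obtain ⟨hr, ha⟩ := mem_product.mp hx
    obtain ⟨hmod, hdiv⟩ := hdigit hr x.2
    exact mem_carryFreeTuples_iff_mod_div.mpr ⟨hmod ▸ hr, hdiv ▸ ha⟩
  · exact funext fun j => Nat.div_add_mod (e j) p
  · obtain ⟨hmod, hdiv⟩ := hdigit (mem_product.mp hx).1 x.2
    exact Prod.ext hmod hdiv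

lemma card_carryFreeTuples_eq_prod (hp : 0 < p) {N : ℕ} (ht : t < p ^ N) :
    #(carryFreeTuples p k t)
      = ∏ l ∈ range N, (k + t / p ^ l % p - 1).choose (t / p ^ l % p) := by
  induction N generalizing t with
  | zero => simp [Nat.lt_one_iff.mp ht, carryFreeTuples_zero_right]
  | succ N ih =>
    rw [prod_range_succ', card_carryFreeTuples hp,
      ih ((Nat.div_lt_iff_lt_mul hp).mpr (by rwa [← pow_succ])), mul_comm]
    simp only [pow_zero, Nat.div_one, Nat.div_div_eq_div_mul, ← pow_succ']

end carryFreeTuples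

theorem stmt15_general (p : ℕ) (hp : p.Prime) (t m : ℕ) :
    (∏ l ∈ Finset.range (t + 1),
        (m + (Nat.digits p t).getD l 0).choose ((Nat.digits p t).getD l 0))
      ≤ (m + t).choose t ∧
    ((∏ l ∈ Finset.range (t + 1),
        (m + (Nat.digits p t).getD l 0).choose ((Nat.digits p t).getD l 0))
      = (m + t).choose t ↔
        ∀ e : Fin (m + 1) → ℕ, ∑ i, e i = t →
          Nat.Coprime (Nat.multinomial Finset.univ e) p) := by
  have hcarryFree : ∏ l ∈ range (t + 1),
      (m + (Nat.digits p t).getD l 0).choose ((Nat.digits p t).getD l 0)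
        = #(carryFreeTuples p (m + 1) t) := by
    rw [card_carryFreeTuples_eq_prod hp.pos (Nat.lt_of_succ_lt (Nat.lt_pow_self hp.one_lt))]
    refine prod_congr rfl fun l _ => ?_
    rw [Nat.getD_digits _ _ hp.two_le, Nat.add_right_comm, Nat.add_sub_cancel]
  have hall : (m + t).choose t = #(Nat.antidiagonalTuple (m + 1) t) := by
    rw [card_antidiagonalTuple, Nat.add_right_comm, Nat.add_sub_cancel]
  have hsub : carryFreeTuples p (m + 1) t ⊆ Nat.antidiagonalTuple (m + 1) t :=
    carryFreeTuples_subset_antidiagonalTuple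
  rw [hcarryFree, hall]
  refine ⟨card_le_card hsub, ?_⟩
  calc #(carryFreeTuples p (m + 1) t) = #(Nat.antidiagonalTuple (m + 1) t)
      ↔ Nat.antidiagonalTuple (m + 1) t ⊆ carryFreeTuples p (m + 1) t :=
        ⟨fun h => (eq_of_subset_of_card_le hsub h.ge).ge,
          fun h => congrArg card (hsub.antisymm h)⟩
    _ ↔ _ := by
      simp only [subset_iff, Nat.mem_antidiagonalTuple, mem_carryFreeTuples,
        coprime_multinomial_iff hp]
      exact forall_congr' fun e => imp_congr_right fun he => by rw [he]

/-- Π_λ C(m + t_λ, t_λ) ≤ C(m + t, t), where t_λ are the base-p digits of t, with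
equality iff every multinomial coefficient t!/(e_0!⋯e_m!), Σ e_i = t, is coprime to p. -/
theorem stmt15 (p : ℕ) (hp : p.Prime) (t m : ℕ) (ht : 1 ≤ t) :
    (∏ l ∈ Finset.range (t + 1),
        (m + (Nat.digits p t).getD l 0).choose ((Nat.digits p t).getD l 0))
      ≤ (m + t).choose t ∧
    ((∏ l ∈ Finset.range (t + 1),
        (m + (Nat.digits p t).getD l 0).choose ((Nat.digits p t).getD l 0))
      = (m + t).choose t ↔
        ∀ e : Fin (m + 1) → ℕ, ∑ i, e i = t →
          Nat.Coprime (Nat.multinomial Finset.univ e) p) :=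
  stmt15_general p hp t m
end

section
/- Let F be a field of characteristic 2 with |F| ≥ 3 and V a 3-dimensional F-vector space. Then the span of {a^3 : a ∈ V} in Sym^3(V) has codimension exactly 1; equivalently, the nucleus of the Veronese variety V_2^3 is a single point. -/
/-!
In characteristic 2 Frobenius gives `ℓ ^ 2 = ∑ aᵢ² Xᵢ²` for a linear form `ℓ = ∑ aᵢ Xᵢ`, so
`ℓ ^ 3 = ℓ ^ 2 * ℓ` lies in the span of the nine monomials `Xᵢ² Xⱼ`, which misses `X₀ X₁ X₂`.
Conversely each `Xᵢ² Xⱼ` is a combination of the cubes of `s Xᵢ + t Xⱼ`: as soon as `F` has an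
element `ε ∉ {0, 1}`, the cubes for `t = 1` and `t = ε` separate the two mixed terms. So the cubes
span a space of dimension `9`, inside the `10`-dimensional space of cubic forms.
-/

open MvPolynomial Module Finset Submodule

section CubeSpan

variable {F A : Type*} [Field F] [CommRing A] [Algebra F A]

theorem sq_mul_mem_of_forall_cube_mem {S : Submodule F A} {ε : F} (hε0 : ε ≠ 0) (hε1 : ε ≠ 1)
    (h3 : (3 : F) ≠ 0) {x y : A} (hxy : ∀ s t : F, (s • x + t • y) ^ 3 ∈ S) : x ^ 2 * y ∈ S := by
  have hx : x ^ 3 ∈ S := by simpa using hxy 1 0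
  have hy : y ^ 3 ∈ S := by simpa using hxy 0 1
  have hne : 3 * (ε ^ 2 - ε) ≠ 0 :=
    mul_ne_zero h3 (by rw [sq, ← mul_sub_one]; exact mul_ne_zero hε0 (sub_ne_zero.mpr hε1))
  -- `(x + t y)³ - x³ - t³ y³ = 3t x²y + 3t² xy²`; eliminate `xy²` between `t = 1` and `t = ε`.
  have key : (3 * (ε ^ 2 - ε)) • (x ^ 2 * y)
      = ε ^ 2 • (((1 : F) • x + (1 : F) • y) ^ 3 - x ^ 3 - y ^ 3)
        - (((1 : F) • x + ε • y) ^ 3 - x ^ 3 - ε ^ 3 • y ^ 3) := by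
    simp only [Algebra.smul_def, map_mul, map_sub, map_pow, map_ofNat, map_one]
    ring
  rw [← inv_smul_smul₀ hne (x ^ 2 * y), key]
  exact smul_mem _ _ (sub_mem (smul_mem _ _ (sub_mem (sub_mem (hxy 1 1) hx) hy))
    (sub_mem (sub_mem (hxy 1 ε) hx) (smul_mem _ _ hy)))

end CubeSpan

theorem exists_ne_zero_ne_one {F : Type*} [Field F] (hF : (3 : Cardinal) ≤ Cardinal.mk F) :
    ∃ ε : F, ε ≠ 0 ∧ ε ≠ 1 := by
  by_contra! h
  have hsub : (Set.univ : Set F) ⊆ {0, 1} := fun x _ => by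
    by_cases hx : x = 0
    · simp [hx]
    · simp [h x hx]
  have hle := Cardinal.mk_univ (α := F) ▸
    (Cardinal.mk_le_mk_of_subset hsub).trans Cardinal.mk_insert_le
  have := hF.trans hle
  norm_num at this

theorem finrank_homogeneousSubmodule (σ F : Type*) [Fintype σ] [Field F] (n : ℕ) :
    finrank F (homogeneousSubmodule σ F n) = (Fintype.card σ + n - 1).choose n := by
  classical
  have hs : {d : σ →₀ ℕ | d.degree = n}
      = ((univ : Finset σ).finsuppAntidiag n : Set (σ →₀ ℕ)) := by
    ext d
    simp [Finsupp.degree_eq_sum]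
  rw [homogeneousSubmodule_eq_finsupp_supported, hs,
    (AddMonoidAlgebra.supportedEquivFinsupp _).finrank_eq, finrank_finsupp_self]
  simp [card_finsuppAntidiag_nat_eq_choose]

section Monomials

variable {σ F : Type*} [Field F]

theorem single_two_add_single_one_injective :
    Function.Injective fun p : σ × σ => Finsupp.single p.1 2 + Finsupp.single p.2 (1 : ℕ) := by
  classical
  rintro ⟨i, j⟩ ⟨i', j'⟩ h
  have hi : i' = i := by
    by_contra hne
    have := DFunLike.congr_fun h i
    simp only [Finsupp.add_apply, Finsupp.single_apply, hne] at this
    split_ifs at this <;> omega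
  subst hi
  exact Prod.ext rfl (Finsupp.single_left_injective one_ne_zero (add_left_cancel h))

theorem linearIndependent_X_sq_mul_X :
    LinearIndependent F fun p : σ × σ => (X p.1 ^ 2 * X p.2 : MvPolynomial σ F) := by
  have : (fun p : σ × σ => (X p.1 ^ 2 * X p.2 : MvPolynomial σ F))
      = basisMonomials σ F ∘ fun p => Finsupp.single p.1 2 + Finsupp.single p.2 1 := by
    ext p : 1
    rw [Function.comp_apply, coe_basisMonomials, X_pow_eq_monomial, X, monomial_mul, one_mul]
  rw [this]
  exact (basisMonomials σ F).linearIndependent.comp _ single_two_add_single_one_injective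

variable [Fintype σ]

theorem sum_C_mul_X_pi_single_add_pi_single [DecidableEq σ] (i j : σ) (s t : F) :
    ∑ k, C ((Pi.single i s + Pi.single j t : σ → F) k) * X k = s • X i + t • X j := by
  simp [add_mul, sum_add_distrib, Pi.single_apply, smul_eq_C_mul, apply_ite C, ite_mul]

theorem sum_C_mul_X_pow_three_mem_span_X_sq_mul_X [CharP F 2] (a : σ → F) :
    (∑ i, C (a i) * X i) ^ 3
      ∈ span F (Set.range fun p : σ × σ => (X p.1 ^ 2 * X p.2 : MvPolynomial σ F)) := by
  rw [pow_succ, CharTwo.sum_sq, sum_mul_sum]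
  refine sum_mem fun i _ => sum_mem fun j _ => ?_
  have : (C (a i) * X i) ^ 2 * (C (a j) * X j)
      = (a i ^ 2 * a j) • (X i ^ 2 * X j : MvPolynomial σ F) := by
    rw [smul_eq_C_mul]
    simp only [map_mul, map_pow]
    ring
  rw [this]
  exact smul_mem _ _ (subset_span ⟨(i, j), rfl⟩)

theorem span_cubes_eq_span_X_sq_mul_X [CharP F 2] {ε : F} (hε0 : ε ≠ 0) (hε1 : ε ≠ 1) :
    span F {f : MvPolynomial σ F | ∃ a : σ → F, f = (∑ i, C (a i) * X i) ^ 3}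
      = span F (Set.range fun p : σ × σ => (X p.1 ^ 2 * X p.2 : MvPolynomial σ F)) := by
  classical
  apply le_antisymm
  · rw [span_le]
    rintro _ ⟨a, rfl⟩
    exact sum_C_mul_X_pow_three_mem_span_X_sq_mul_X a
  · rw [span_le]
    rintro _ ⟨⟨i, j⟩, rfl⟩
    have h3 : (3 : F) ≠ 0 := by
      rw [CharTwo.ofNat_eq_mod]
      norm_num
    refine sq_mul_mem_of_forall_cube_mem hε0 hε1 h3 fun s t => ?_
    rw [← sum_C_mul_X_pi_single_add_pi_single]
    exact subset_span ⟨_, rfl⟩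

end Monomials

/-- Over a field of characteristic 2 with at least 3 elements, the span of the cubes
{a^3 : a ∈ V} in Sym³ of a 3-dimensional space (modelled as homogeneous cubic polynomials
in 3 variables) has codimension exactly 1; the nucleus of V_2^3 is a single point. -/
theorem stmt17 (F : Type*) [Field F] [CharP F 2] (hF : (3 : Cardinal) ≤ Cardinal.mk F) :
    Module.finrank F (MvPolynomial.homogeneousSubmodule (Fin 3) F 3)
      = Module.finrank F (Submodule.span F
          {f : MvPolynomial (Fin 3) F |
            ∃ a : Fin 3 → F, f = (∑ i, MvPolynomial.C (a i) * MvPolynomial.X i) ^ 3})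
        + 1 := by
  obtain ⟨ε, hε0, hε1⟩ := exists_ne_zero_ne_one hF
  rw [finrank_homogeneousSubmodule, span_cubes_eq_span_X_sq_mul_X hε0 hε1,
    finrank_span_eq_card linearIndependent_X_sq_mul_X]
  rfl
end
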